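/- Let x ∈ ℝ and z ∈ ℂ with Δ := x(1−x) − |z|² > 0, let (ẋ, ż) ∈ ℝ × ℂ, and let L be the closed-form SLD matrix built from (x, z, ẋ, ż) (with entries x_L, y_L, a, b as in the closed-form solution). Setting C := 2√Δ and Ċ := ((1−2x)ẋ − 2·Re(conj(z)·ż))/√Δ, the trace of the SLD satisfies Tr L = x_L + y_L = ((1−2x)ẋ − 2·Re(conj(z)·ż))/Δ = 2Ċ/C. -/

import Mathlib

open Complex

/-- The closed-form SLD matrix associated with the reduced state data `(x, z)`
and tangent data `(xd, zd)`. -/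
noncomputable def sldMat (x : ℝ) (z : ℂ) (xd : ℝ) (zd : ℂ) : Matrix (Fin 2) (Fin 2) ℂ :=
  let Δ : ℝ := x * (1 - x) - ‖z‖ ^ 2
  let α : ℝ := ‖z‖ ^ 2
  let β : ℝ := 2 * (zd * (starRingEnd ℂ) z).re
  let xL : ℝ := (β * (x - 1) - xd * (2 * α + x - 1)) / Δ
  let yL : ℝ := ((2 * α - x) * xd - β * x) / Δ
  let S : ℝ := xL + yL
  let a : ℝ := 2 * zd.re - z.re * S
  let b : ℝ := 2 * zd.im - z.im * S
  !![(xL : ℂ), (a : ℂ) + (b : ℂ) * Complex.I;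
     (a : ℂ) - (b : ℂ) * Complex.I, (yL : ℂ)]

/-! The diagonal entries of `L` share the denominator `Δ`, so their sum collapses to
`((1 - 2x)ẋ - β)/Δ`; as `C² = 4Δ`, this is the logarithmic derivative `2Ċ/C` of the concurrence. -/

theorem sld_diagonal_sum {K : Type*} [Field K] (x xd α β Δ : K) :
    (β * (x - 1) - xd * (2 * α + x - 1)) / Δ + ((2 * α - x) * xd - β * x) / Δ
      = ((1 - 2 * x) * xd - β) / Δ := by
  rw [← add_div]
  ring

theorem two_mul_div_sqrt_div_two_mul_sqrt (N : ℝ) {Δ : ℝ} (hΔ : 0 ≤ Δ) :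
    2 * (N / Real.sqrt Δ) / (2 * Real.sqrt Δ) = N / Δ := by
  rw [mul_div_mul_left _ _ two_ne_zero, div_div, Real.mul_self_sqrt hΔ]

/-- Trace of the closed-form SLD:
`Tr L = x_L + y_L = ((1−2x)ẋ − 2 Re(conj z · ż))/Δ = 2Ċ/C`. -/
theorem sld_trace (x : ℝ) (z : ℂ) (xd : ℝ) (zd : ℂ)
    (hΔ : x * (1 - x) - ‖z‖ ^ 2 > 0) :
    let Δ : ℝ := x * (1 - x) - ‖z‖ ^ 2
    let α : ℝ := ‖z‖ ^ 2
    let β : ℝ := 2 * (zd * (starRingEnd ℂ) z).re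
    let xL : ℝ := (β * (x - 1) - xd * (2 * α + x - 1)) / Δ
    let yL : ℝ := ((2 * α - x) * xd - β * x) / Δ
    let C : ℝ := 2 * Real.sqrt Δ
    let Cd : ℝ := ((1 - 2 * x) * xd - 2 * ((starRingEnd ℂ) z * zd).re) / Real.sqrt Δ
    Matrix.trace (sldMat x z xd zd) = ((xL + yL : ℝ) : ℂ) ∧
    xL + yL = ((1 - 2 * x) * xd - 2 * ((starRingEnd ℂ) z * zd).re) / Δ ∧
    ((1 - 2 * x) * xd - 2 * ((starRingEnd ℂ) z * zd).re) / Δ = 2 * Cd / C := by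
  intro Δ α β xL yL C Cd
  refine ⟨?_, ?_, (two_mul_div_sqrt_div_two_mul_sqrt _ hΔ.le).symm⟩
  · exact (Matrix.trace_fin_two_of _ _ _ _).trans (ofReal_add xL yL).symm
  · rw [mul_comm ((starRingEnd ℂ) z)]
    exact sld_diagonal_sum x xd α β Δ
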